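/- For every n ≥ 0 and every m ≥ 1, the coefficients of the monic matrix orthogonal polynomials and the moment coefficients b_{n,k} satisfy Σ_{j=0}^m a_{n,n-m+j}·b_{n,n+j-1}* = Σ_{j=0}^m b_{n,n+m-j-1}·a_{n,n-j}*. -/

import Mathlib

open MeasureTheory Matrix Complex Finset
open scoped ComplexOrder

/-- Entrywise integral of a matrix-valued function over an interval `(a, b)`. -/
noncomputable def mint {N : ℕ} (a b : ℝ) (F : ℝ → Matrix (Fin N) (Fin N) ℂ) :
    Matrix (Fin N) (Fin N) ℂ :=
  Matrix.of fun i j => ∫ x in a..b, F x i j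

/-! Put `g k = a_{n,k} b_{n,k+m-1}^*`. Expanding the right-hand factor `P̂_n^*` in its coefficients
shows that `H = ∑_{k=0}^{n} g k` is the adjoint of `∫ x^{m-1} P̂_n W P̂_n^*`, so `H` is Hermitian
because `W` is. Since `a_{n,k} = 0` for `k < 0` and orthogonality gives `b_{n,k} = 0` for
`0 ≤ k < n`, the sum `∑_{j=0}^{m} g (n - j)` differs from `H` only by vanishing terms. The
left-hand side is this sum with its index reversed, and the right-hand side is its adjoint. -/

theorem sum_range_succ_sub_eq_sum_range_succ {M : Type*} [AddCommMonoid M] (F : ℤ → M)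
    {n m : ℕ} (hneg : ∀ k < 0, F k = 0) (hlow : ∀ k : ℕ, k < n - m → F k = 0) :
    ∑ j ∈ range (m + 1), F (n - j) = ∑ k ∈ range (n + 1), F k := by
  have hvanish : ∀ j ≥ min m n + 1, F (n - j) = 0 := fun j hj => by
    rcases lt_or_ge n j with hnj | hjn
    · exact hneg _ (by omega)
    · rw [← Nat.cast_sub hjn]
      exact hlow _ (by omega)
  calc ∑ j ∈ range (m + 1), F (n - j)
      = ∑ j ∈ range (min m n + 1), F (n - j) := eventually_constant_sum hvanish (by omega)
    _ = ∑ j ∈ range (n + 1), F (n - j) := (eventually_constant_sum hvanish (by omega)).symm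
    _ = ∑ k ∈ range (n + 1), F k := by
      rw [← sum_range_reflect]
      refine sum_congr rfl fun j hj => congrArg F ?_
      rw [mem_range] at hj
      omega

section

variable {N : ℕ} {a b : ℝ}

theorem conjTranspose_mint (F : ℝ → Matrix (Fin N) (Fin N) ℂ) :
    (mint a b F)ᴴ = mint a b fun x => (F x)ᴴ := by
  ext i j
  simp [mint, ← intervalIntegral.intervalIntegral_conj]

theorem mint_congr_Ioo (hab : a ≤ b) {F G : ℝ → Matrix (Fin N) (Fin N) ℂ}
    (h : Set.EqOn F G (Set.Ioo a b)) : mint a b F = mint a b G := by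
  ext i j
  simp only [mint, of_apply, intervalIntegral.integral_of_le hab, integral_Ioc_eq_integral_Ioo]
  exact setIntegral_congr_fun measurableSet_Ioo fun x hx => by rw [h hx]

theorem isHermitian_mint (hab : a ≤ b) {F : ℝ → Matrix (Fin N) (Fin N) ℂ}
    (hF : ∀ x ∈ Set.Ioo a b, (F x).IsHermitian) : (mint a b F).IsHermitian := by
  rw [IsHermitian, conjTranspose_mint]
  exact mint_congr_Ioo hab fun x hx => (hF x hx).eq

theorem mint_sum {ι : Type*} (s : Finset ι) (F : ι → ℝ → Matrix (Fin N) (Fin N) ℂ)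
    (hF : ∀ k ∈ s, ∀ i j, IntervalIntegrable (fun x => F k x i j) volume a b) :
    mint a b (fun x => ∑ k ∈ s, F k x) = ∑ k ∈ s, mint a b (F k) := by
  ext i j
  simp only [mint, of_apply, Matrix.sum_apply]
  exact intervalIntegral.integral_finsetSum fun k hk => hF k hk i j

theorem mint_mul_const (F : ℝ → Matrix (Fin N) (Fin N) ℂ) (C : Matrix (Fin N) (Fin N) ℂ)
    (hF : ∀ i j, IntervalIntegrable (fun x => F x i j) volume a b) :
    mint a b (fun x => F x * C) = mint a b F * C := by
  ext i j
  simp only [mint, of_apply, mul_apply]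
  rw [intervalIntegral.integral_finsetSum fun k _ => (hF i k).mul_const _]
  exact sum_congr rfl fun k _ => intervalIntegral.integral_mul_const _ _

theorem intervalIntegrable_finsetSum {ι : Type*} (s : Finset ι) {f : ι → ℝ → ℂ}
    (h : ∀ k ∈ s, IntervalIntegrable (f k) volume a b) :
    IntervalIntegrable (fun x => ∑ k ∈ s, f k x) volume a b := by
  simpa only [Finset.sum_fn] using IntervalIntegrable.sum s h

theorem intervalIntegrable_mul_const_apply {F : ℝ → Matrix (Fin N) (Fin N) ℂ}
    (hF : ∀ i j, IntervalIntegrable (fun x => F x i j) volume a b)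
    (C : Matrix (Fin N) (Fin N) ℂ) (i j : Fin N) :
    IntervalIntegrable (fun x => (F x * C) i j) volume a b := by
  simp only [mul_apply]
  exact intervalIntegrable_finsetSum _ fun k _ => (hF i k).mul_const _

theorem intervalIntegrable_ofReal_pow_mul_apply (hab : a ≤ b)
    {W : ℝ → Matrix (Fin N) (Fin N) ℂ} (hWcont : ContinuousOn W (Set.Ioo a b))
    (hWmom : ∀ (n : ℕ) (i j : Fin N),
      IntegrableOn (fun x : ℝ => |x| ^ n * ‖W x i j‖) (Set.Ioo a b))
    (k : ℕ) (i j : Fin N) :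
    IntervalIntegrable (fun x : ℝ => (x : ℂ) ^ k * W x i j) volume a b := by
  rw [intervalIntegrable_iff_integrableOn_Ioo_of_le hab]
  have hcont : ContinuousOn (fun x : ℝ => (x : ℂ) ^ k * W x i j) (Set.Ioo a b) :=
    (continuous_ofReal.pow k).continuousOn.mul
      ((continuous_apply_apply i j).comp_continuousOn hWcont)
  refine Integrable.mono' (hWmom k i j) (hcont.aestronglyMeasurable measurableSet_Ioo) ?_
  filter_upwards with x
  simp

section Polynomial

variable {W : ℝ → Matrix (Fin N) (Fin N) ℂ}
  (hW : ∀ (k : ℕ) (i j : Fin N),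
    IntervalIntegrable (fun x : ℝ => (x : ℂ) ^ k * W x i j) volume a b)
  {Q : ℂ → Matrix (Fin N) (Fin N) ℂ} {s : Finset ℕ} {c : ℕ → Matrix (Fin N) (Fin N) ℂ}
  (hQ : ∀ z, Q z = ∑ j ∈ s, z ^ j • c j)

include hW hQ in
theorem intervalIntegrable_pow_smul_polynomial_mul_apply (k : ℕ) (i l : Fin N) :
    IntervalIntegrable (fun x : ℝ => ((x : ℂ) ^ k • (Q x * W x)) i l) volume a b := by
  have hexpand : (fun x : ℝ => ((x : ℂ) ^ k • (Q x * W x)) i l) = fun x : ℝ =>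
      ∑ j ∈ s, ∑ p, c j i p * ((x : ℂ) ^ (k + j) * W x p l) := by
    funext x
    simp only [hQ, Matrix.smul_apply, mul_apply, Matrix.sum_apply, smul_eq_mul, sum_mul, mul_sum,
      pow_add]
    exact sum_congr rfl fun j _ => sum_congr rfl fun p _ => by ring
  rw [hexpand]
  exact intervalIntegrable_finsetSum _ fun j _ => intervalIntegrable_finsetSum _ fun p _ =>
    (hW (k + j) p l).const_mul _

include hQ in
theorem conjTranspose_polynomial_ofReal (x : ℝ) :
    (Q x)ᴴ = ∑ j ∈ s, (x : ℂ) ^ j • (c j)ᴴ := by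
  simp [hQ, conjTranspose_sum, conjTranspose_smul, ← ofReal_pow]

include hW hQ in
theorem mint_pow_smul_mul_polynomial_conjTranspose {R : ℂ → Matrix (Fin N) (Fin N) ℂ}
    {t : Finset ℕ} {e : ℕ → Matrix (Fin N) (Fin N) ℂ} (hR : ∀ z, R z = ∑ j ∈ t, z ^ j • e j)
    (k : ℕ) :
    mint a b (fun x : ℝ => (x : ℂ) ^ k • (Q x * W x * (R x)ᴴ)) =
      ∑ j ∈ t, mint a b (fun x : ℝ => (x : ℂ) ^ (k + j) • (Q x * W x)) * (e j)ᴴ := by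
  have hQW := intervalIntegrable_pow_smul_polynomial_mul_apply hW hQ
  have hexpand : (fun x : ℝ => (x : ℂ) ^ k • (Q x * W x * (R x)ᴴ)) = fun x : ℝ =>
      ∑ j ∈ t, (x : ℂ) ^ (k + j) • (Q x * W x) * (e j)ᴴ := by
    funext x
    simp only [conjTranspose_polynomial_ofReal hR, mul_sum, smul_sum, Matrix.mul_smul, smul_smul,
      ← pow_add, Matrix.smul_mul]
  rw [hexpand, mint_sum _ _ fun j _ => intervalIntegrable_mul_const_apply (hQW _) _]
  exact sum_congr rfl fun j _ => mint_mul_const _ _ (hQW _)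

end Polynomial

theorem isHermitian_mint_pow_smul_mul_mul_conjTranspose (hab : a ≤ b)
    {W : ℝ → Matrix (Fin N) (Fin N) ℂ} (hW : ∀ x ∈ Set.Ioo a b, (W x).IsHermitian)
    (Q : ℂ → Matrix (Fin N) (Fin N) ℂ) (k : ℕ) :
    (mint a b fun x : ℝ => (x : ℂ) ^ k • (Q x * W x * (Q x)ᴴ)).IsHermitian :=
  isHermitian_mint hab fun x hx => (isHermitian_mul_mul_conjTranspose _ (hW x hx)).smul
    (by simp [IsSelfAdjoint, ← ofReal_pow])

end

theorem stmt9_general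
    (N : ℕ) (a b : ℝ) (hab : a < b)
    (W : ℝ → Matrix (Fin N) (Fin N) ℂ)
    (hWcont : ContinuousOn W (Set.Ioo a b))
    (hWpos : ∀ x ∈ Set.Ioo a b, (W x).PosDef)
    (hWmom : ∀ (n : ℕ) (i j : Fin N),
      IntegrableOn (fun x : ℝ => |x| ^ n * ‖W x i j‖) (Set.Ioo a b))
    (aC : ℕ → ℤ → Matrix (Fin N) (Fin N) ℂ)
    (haLow : ∀ (n : ℕ) (j : ℤ), j < 0 → aC n j = 0)
    (P : ℕ → ℂ → Matrix (Fin N) (Fin N) ℂ)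
    (hP : ∀ (n : ℕ) (z : ℂ), P n z = ∑ j ∈ Finset.range (n + 1), z ^ j • aC n j)
    (horth : ∀ n j : ℕ, j < n →
      mint a b (fun x => ((x : ℂ) ^ j) • (P n (x : ℂ) * W x)) = 0)
    (bC : ℕ → ℤ → Matrix (Fin N) (Fin N) ℂ)
    (hb : ∀ (n k : ℕ), bC n (k : ℤ) = mint a b (fun x => ((x : ℂ) ^ k) • (P n (x : ℂ) * W x)))
 :
    ∀ n : ℕ, ∀ m : ℕ, 1 ≤ m →
      ∑ j ∈ Finset.range (m + 1), aC n ((n : ℤ) - (m : ℤ) + (j : ℤ)) *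
          (bC n ((n : ℤ) + (j : ℤ) - 1))ᴴ =
        ∑ j ∈ Finset.range (m + 1), bC n ((n : ℤ) + (m : ℤ) - (j : ℤ) - 1) *
          (aC n ((n : ℤ) - (j : ℤ)))ᴴ := by
  intro n m hm
  set g : ℤ → Matrix (Fin N) (Fin N) ℂ := fun k => aC n k * (bC n (k + m - 1))ᴴ
  have hlhs : ∑ j ∈ range (m + 1), aC n ((n : ℤ) - (m : ℤ) + (j : ℤ)) *
      (bC n ((n : ℤ) + (j : ℤ) - 1))ᴴ = ∑ j ∈ range (m + 1), g (n - j) := by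
    rw [← sum_range_reflect (fun j : ℕ => g (n - j))]
    refine sum_congr rfl fun j hj => ?_
    have hj' : ((m + 1 - 1 - j : ℕ) : ℤ) = m - j := by rw [mem_range] at hj; omega
    simp only [g, hj']
    congr 2 <;> ring_nf
  have hrhs : ∑ j ∈ range (m + 1), bC n ((n : ℤ) + (m : ℤ) - (j : ℤ) - 1) *
      (aC n ((n : ℤ) - (j : ℤ)))ᴴ = (∑ j ∈ range (m + 1), g (n - j))ᴴ := by
    rw [conjTranspose_sum]
    refine sum_congr rfl fun j _ => ?_
    simp only [g, conjTranspose_mul, conjTranspose_conjTranspose]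
    congr 2
    ring
  have htrunc : ∑ j ∈ range (m + 1), g (n - j) = ∑ k ∈ range (n + 1), g k := by
    refine sum_range_succ_sub_eq_sum_range_succ g (fun k hk => by simp [g, haLow n k hk])
      fun k hk => ?_
    have hk' : (k : ℤ) + m - 1 = ((k + m - 1 : ℕ) : ℤ) := by omega
    simp [g, hk', hb, horth n (k + m - 1) (by omega)]
  have hmoment : ∑ k ∈ range (n + 1), g k =
      (mint a b fun x : ℝ => (x : ℂ) ^ (m - 1) • (P n x * W x * (P n x)ᴴ))ᴴ := by
    rw [mint_pow_smul_mul_polynomial_conjTranspose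
      (intervalIntegrable_ofReal_pow_mul_apply hab.le hWcont hWmom) (hP n) (hP n),
      conjTranspose_sum]
    refine sum_congr rfl fun k _ => ?_
    have hk' : (k : ℤ) + m - 1 = ((m - 1 + k : ℕ) : ℤ) := by omega
    simp only [g, hk', hb, conjTranspose_mul, conjTranspose_conjTranspose]
  rw [hlhs, hrhs, htrunc, hmoment, conjTranspose_conjTranspose,
    (isHermitian_mint_pow_smul_mul_mul_conjTranspose hab.le (fun x hx => (hWpos x hx).1) _ _).eq]

theorem stmt9
    (N : ℕ) (hN : 1 ≤ N) (a b : ℝ) (hab : a < b)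
    (W : ℝ → Matrix (Fin N) (Fin N) ℂ)
    (hWcont : ContinuousOn W (Set.Ioo a b))
    (hWpos : ∀ x ∈ Set.Ioo a b, (W x).PosDef)
    (hWmom : ∀ (n : ℕ) (i j : Fin N),
      IntegrableOn (fun x : ℝ => |x| ^ n * ‖W x i j‖) (Set.Ioo a b))
    (hWnt : ∀ (d : ℕ) (c : Fin (d + 1) → Matrix (Fin N) (Fin N) ℂ), (∃ k, c k ≠ 0) →
      IsUnit (mint a b (fun x =>
        (∑ k : Fin (d + 1), ((x : ℂ) ^ (k : ℕ)) • c k) * W x * (∑ k : Fin (d + 1), ((x : ℂ) ^ (k : ℕ)) • c k)ᴴ)))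
    (aC : ℕ → ℤ → Matrix (Fin N) (Fin N) ℂ)
    (haDiag : ∀ n : ℕ, aC n n = 1)
    (haHigh : ∀ (n : ℕ) (j : ℤ), (n : ℤ) < j → aC n j = 0)
    (haLow : ∀ (n : ℕ) (j : ℤ), j < 0 → aC n j = 0)
    (P : ℕ → ℂ → Matrix (Fin N) (Fin N) ℂ)
    (hP : ∀ (n : ℕ) (z : ℂ), P n z = ∑ j ∈ Finset.range (n + 1), z ^ j • aC n j)
    (horth : ∀ n j : ℕ, j < n →
      mint a b (fun x => ((x : ℂ) ^ j) • (P n (x : ℂ) * W x)) = 0)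
    (bC : ℕ → ℤ → Matrix (Fin N) (Fin N) ℂ)
    (hb : ∀ (n k : ℕ), bC n (k : ℤ) = mint a b (fun x => ((x : ℂ) ^ k) • (P n (x : ℂ) * W x)))
    (hbLow : ∀ (n : ℕ) (k : ℤ), k < 0 → bC n k = 0)
 :
    ∀ n : ℕ, ∀ m : ℕ, 1 ≤ m →
      ∑ j ∈ Finset.range (m + 1), aC n ((n : ℤ) - (m : ℤ) + (j : ℤ)) *
          (bC n ((n : ℤ) + (j : ℤ) - 1))ᴴ =
        ∑ j ∈ Finset.range (m + 1), bC n ((n : ℤ) + (m : ℤ) - (j : ℤ) - 1) *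
          (aC n ((n : ℤ) - (j : ℤ)))ᴴ :=
  stmt9_general N a b hab W hWcont hWpos hWmom aC haLow P hP horth bC hb
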